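/- arXiv:2601.01664 — 2 statements merged into one kernel-verified Lean document; each statement's English description precedes it below -/
import Mathlib

section
/- Let a, b, c, d be reals with a ≠ 0 and suppose (at - b)² + ct + d > 0 for all t in an interval I. Then the function z(t) = √((at - b)² + ct + d) is concave on I if and only if 2abc + 2a²d - c²/2 ≤ 0. -/
section aux

private lemma alg (u A s K2 : ℝ) (hs : 0 < s) (hK : 4 * A * s ^ 2 - u ^ 2 = K2) :
    K2 / (4 * s ^ 2 * s) = (2 * A * (2 * s) - u * (2 * (u / (2 * s)))) / (2 * s) ^ 2 := by
  have hs' : s ≠ 0 := hs.ne'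
  rw [← hK]
  field_simp
  ring

variable (a b c d : ℝ)

private lemma hd_p (t : ℝ) :
    HasDerivAt (fun t => (a * t - b) ^ 2 + c * t + d) (2 * a * (a * t - b) + c) t := by
  have h1 : HasDerivAt (fun t : ℝ => a * t - b) a t := by
    simpa using ((hasDerivAt_id t).const_mul a).sub_const b
  have h2 := h1.pow 2
  have h3 : HasDerivAt (fun t : ℝ => c * t) c t := by
    simpa using (hasDerivAt_id t).const_mul c
  have := (h2.add h3).add_const d
  exact this.congr_deriv (by ring)

private lemma hd_z (t : ℝ) (hpt : 0 < (a * t - b) ^ 2 + c * t + d) :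
    HasDerivAt (fun t => Real.sqrt ((a * t - b) ^ 2 + c * t + d))
      ((2 * a * (a * t - b) + c) / (2 * Real.sqrt ((a * t - b) ^ 2 + c * t + d))) t := by
  have hs := (Real.hasDerivAt_sqrt (ne_of_gt hpt)).comp t (hd_p a b c d t)
  exact hs.congr_deriv (by ring)

private lemma hd_z2 (t : ℝ) (hpt : 0 < (a * t - b) ^ 2 + c * t + d) :
    HasDerivAt (fun t => (2 * a * (a * t - b) + c) / (2 * Real.sqrt ((a * t - b) ^ 2 + c * t + d)))
      ((4 * a * b * c + 4 * a ^ 2 * d - c ^ 2) /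
        (4 * ((a * t - b) ^ 2 + c * t + d) * Real.sqrt ((a * t - b) ^ 2 + c * t + d))) t := by
  set p := fun t => (a * t - b) ^ 2 + c * t + d with hp
  have hsq : Real.sqrt (p t) ≠ 0 := by positivity
  have hu : HasDerivAt (fun t => 2 * a * (a * t - b) + c) (2 * a ^ 2) t := by
    have h1 : HasDerivAt (fun t : ℝ => a * t - b) a t := by
      simpa using ((hasDerivAt_id t).const_mul a).sub_const b
    have := (h1.const_mul (2 * a)).add_const c
    exact this.congr_deriv (by ring)
  have hv : HasDerivAt (fun t => 2 * Real.sqrt (p t))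
      (2 * ((2 * a * (a * t - b) + c) / (2 * Real.sqrt (p t)))) t :=
    (hd_z a b c d t hpt).const_mul 2
  have h := hu.div hv (by positivity)
  refine h.congr_deriv (Eq.symm ?_)
  have hps : Real.sqrt (p t) * Real.sqrt (p t) = p t := Real.mul_self_sqrt hpt.le
  have hs : 0 < Real.sqrt (p t) := Real.sqrt_pos.mpr hpt
  have hrw : p t = Real.sqrt (p t) ^ 2 := by rw [Real.sq_sqrt hpt.le]
  have key : 4 * a ^ 2 * Real.sqrt (p t) ^ 2 - (2 * a * (a * t - b) + c) ^ 2
      = 4 * a * b * c + 4 * a ^ 2 * d - c ^ 2 := by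
    rw [← hrw]; simp only [hp]; ring
  rw [show (4 * ((a * t - b) ^ 2 + c * t + d) * Real.sqrt ((a * t - b) ^ 2 + c * t + d))
      = 4 * Real.sqrt (p t) ^ 2 * Real.sqrt (p t) by rw [← hrw]]
  exact alg _ (a ^ 2) _ _ hs key
end aux

/-- Second-derivative criterion: for `a ≠ 0` and `(at-b)² + ct + d > 0` on a
nontrivial interval `I`, the function `z(t) = √((at-b)² + ct + d)` is concave on
`I` if and only if `2abc + 2a²d - c²/2 ≤ 0`. -/
theorem stmt5 (a b c d lo hi : ℝ) (ha : a ≠ 0) (hlohi : lo < hi)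
    (hpos : ∀ t ∈ Set.Ioo lo hi, (a * t - b) ^ 2 + c * t + d > 0) :
    ConcaveOn ℝ (Set.Ioo lo hi)
        (fun t => Real.sqrt ((a * t - b) ^ 2 + c * t + d)) ↔
      2 * a * b * c + 2 * a ^ 2 * d - c ^ 2 / 2 ≤ 0 := by
  set p := fun t => (a * t - b) ^ 2 + c * t + d with hp
  set f := fun t => Real.sqrt (p t) with hf
  have hcont : ContinuousOn f (Set.Ioo lo hi) := by
    apply Continuous.continuousOn
    continuity
  constructor
  · intro hconc
    by_contra hK
    push_neg at hK
    have hK' : 0 < 4 * a * b * c + 4 * a ^ 2 * d - c ^ 2 := by linarith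
    have hsc : StrictConvexOn ℝ (Set.Ioo lo hi) f := by
      apply strictConvexOn_of_deriv2_pos (convex_Ioo lo hi) hcont
      intro x hx
      rw [interior_Ioo] at hx
      have hpx := hpos x hx
      have hev : deriv f =ᶠ[nhds x]
          (fun t => (2 * a * (a * t - b) + c) / (2 * Real.sqrt (p t))) := by
        have hopen : IsOpen {y | 0 < p y} := isOpen_lt continuous_const (by fun_prop)
        filter_upwards [hopen.mem_nhds hpx] with y hy using (hd_z a b c d y hy).deriv
      have : deriv^[2] f x = deriv (deriv f) x := by simp [Function.iterate_succ]
      rw [this, hev.deriv_eq, (hd_z2 a b c d x hpx).deriv]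
      positivity
    obtain ⟨x, hx, y, hy, hxy, hmx, hmy⟩ :
        ∃ x ∈ Set.Ioo lo hi, ∃ y ∈ Set.Ioo lo hi, x ≠ y ∧ True ∧ True := by
      refine ⟨(3*lo+hi)/4, ⟨by linarith, by linarith⟩, (lo+3*hi)/4,
        ⟨by linarith, by linarith⟩, by intro h; nlinarith [h], trivial, trivial⟩
    have h1 := hsc.2 hx hy hxy (by norm_num : (0:ℝ) < 1/2) (by norm_num : (0:ℝ) < 1/2) (by norm_num)
    have h2 := hconc.2 hx hy (by norm_num : (0:ℝ) ≤ 1/2) (by norm_num : (0:ℝ) ≤ 1/2) (by norm_num)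
    simp only [smul_eq_mul] at h1 h2
    linarith
  · intro hK
    apply concaveOn_of_hasDerivWithinAt2_nonpos (convex_Ioo lo hi) hcont
      (f' := fun t => (2 * a * (a * t - b) + c) / (2 * Real.sqrt (p t)))
      (f'' := fun t => (4 * a * b * c + 4 * a ^ 2 * d - c ^ 2) /
        (4 * p t * Real.sqrt (p t)))
    · intro x hx
      rw [interior_Ioo] at hx
      exact (hd_z a b c d x (hpos x hx)).hasDerivWithinAt
    · intro x hx
      rw [interior_Ioo] at hx
      exact (hd_z2 a b c d x (hpos x hx)).hasDerivWithinAt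
    · intro x hx
      rw [interior_Ioo] at hx
      have hpx := hpos x hx
      apply div_nonpos_of_nonpos_of_nonneg (by linarith)
      positivity
end

section
/- Let n ≥ 1, w₁, w₂ ∈ [0,1] with w₂ ≤ 1 - w₁ and w₁ ≥ (8n - √(8n))/(8n - 1), and let b ∈ [0, w₂]. Then the function t ↦ √(((1-w₁)t - b)² + (1/n)(w₁²·t + w₂²)) is concave on [0,1]. -/
lemma sqrt_cauchy (a b c d : ℝ) (ha : 0 ≤ a) (hb : 0 ≤ b) (hc : 0 ≤ c) (hd : 0 ≤ d) :
    Real.sqrt (a * c) + Real.sqrt (b * d) ≤ Real.sqrt ((a + b) * (c + d)) := by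
  rw [Real.sqrt_mul ha, Real.sqrt_mul hb, Real.sqrt_mul (add_nonneg ha hb)]
  have h1 := Real.sq_sqrt ha
  have h2 := Real.sq_sqrt hb
  have h3 := Real.sq_sqrt hc
  have h4 := Real.sq_sqrt hd
  have h5 := Real.sq_sqrt (add_nonneg ha hb)
  have h6 := Real.sq_sqrt (add_nonneg hc hd)
  have n1 := Real.sqrt_nonneg a
  have n2 := Real.sqrt_nonneg b
  have n3 := Real.sqrt_nonneg c
  have n4 := Real.sqrt_nonneg d
  have n5 := Real.sqrt_nonneg (a + b)
  have n6 := Real.sqrt_nonneg (c + d)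
  nlinarith [sq_nonneg (Real.sqrt a * Real.sqrt d - Real.sqrt b * Real.sqrt c),
    sq_nonneg (Real.sqrt a * Real.sqrt c + Real.sqrt b * Real.sqrt d),
    mul_nonneg n5 n6, mul_nonneg (mul_nonneg n1 n3) (mul_nonneg n2 n4)]

lemma concaveOn_sqrt_mul (α β γ δ : ℝ) (S : Set ℝ) (hS : Convex ℝ S)
    (hu : ∀ t ∈ S, 0 ≤ α * t + β) (hv : ∀ t ∈ S, 0 ≤ γ * t + δ) :
    ConcaveOn ℝ S fun t => Real.sqrt ((α * t + β) * (γ * t + δ)) := by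
  refine ⟨hS, fun x hx y hy p q hp hq hpq => ?_⟩
  have hux := hu x hx
  have huy := hu y hy
  have hvx := hv x hx
  have hvy := hv y hy
  simp only [smul_eq_mul]
  have h1 : α * (p * x + q * y) + β = p * (α * x + β) + q * (α * y + β) := by
    linear_combination (-β) * hpq
  have h2 : γ * (p * x + q * y) + δ = p * (γ * x + δ) + q * (γ * y + δ) := by
    linear_combination (-δ) * hpq
  rw [h1, h2]
  have key := sqrt_cauchy (p * (α * x + β)) (q * (α * y + β)) (p * (γ * x + δ))
    (q * (γ * y + δ)) (mul_nonneg hp hux) (mul_nonneg hq huy)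
    (mul_nonneg hp hvx) (mul_nonneg hq hvy)
  have e1 : Real.sqrt ((p * (α * x + β)) * (p * (γ * x + δ)))
      = p * Real.sqrt ((α * x + β) * (γ * x + δ)) := by
    rw [show (p * (α * x + β)) * (p * (γ * x + δ)) = p ^ 2 * ((α * x + β) * (γ * x + δ)) by ring,
      Real.sqrt_mul (sq_nonneg p), Real.sqrt_sq hp]
  have e2 : Real.sqrt ((q * (α * y + β)) * (q * (γ * y + δ)))
      = q * Real.sqrt ((α * y + β) * (γ * y + δ)) := by
    rw [show (q * (α * y + β)) * (q * (γ * y + δ)) = q ^ 2 * ((α * y + β) * (γ * y + δ)) by ring,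
      Real.sqrt_mul (sq_nonneg q), Real.sqrt_sq hq]
  rw [e1, e2] at key
  exact key

set_option maxHeartbeats 1600000
/-- Proposition 3: concavity in `t` of
`t ↦ √(((1-w₁)t - b)² + (1/n)(w₁²t + w₂²))` on `[0,1]`, given `w₂ ≤ 1 - w₁`,
`0 ≤ b ≤ w₂` and `w₁ ≥ (8n - √(8n))/(8n - 1)`. -/
theorem stmt7 (n : ℕ) (hn : 1 ≤ n) (w₁ w₂ b : ℝ)
    (hw₁ : w₁ ∈ Set.Icc (0 : ℝ) 1) (hw₂ : w₂ ∈ Set.Icc (0 : ℝ) 1)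
    (hw₂w₁ : w₂ ≤ 1 - w₁)
    (hw₁b : (8 * (n : ℝ) - Real.sqrt (8 * (n : ℝ))) / (8 * (n : ℝ) - 1) ≤ w₁)
    (hb : b ∈ Set.Icc (0 : ℝ) w₂) :
    ConcaveOn ℝ (Set.Icc (0 : ℝ) 1)
      (fun t => Real.sqrt (((1 - w₁) * t - b) ^ 2 +
        (1 / (n : ℝ)) * (w₁ ^ 2 * t + w₂ ^ 2))) := by
  obtain ⟨hw₁0, hw₁1⟩ := hw₁
  obtain ⟨hw₂0, hw₂1⟩ := hw₂
  obtain ⟨hb0, hbw⟩ := hb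
  have hN : (1 : ℝ) ≤ (n : ℝ) := by exact_mod_cast hn
  have hN0 : (0 : ℝ) < (n : ℝ) := by linarith
  set N := (n : ℝ) with hNdef
  clear_value N
  clear hNdef hn
  have hNne : N ≠ 0 := ne_of_gt hN0
  -- reduce to providing a factorization into two affine factors nonneg on [0,1]
  have main : ∀ α β γ δ : ℝ, (∀ t ∈ Set.Icc (0:ℝ) 1, 0 ≤ α * t + β) →
      (∀ t ∈ Set.Icc (0:ℝ) 1, 0 ≤ γ * t + δ) →
      (∀ t : ℝ, ((1 - w₁) * t - b) ^ 2 + (1 / N) * (w₁ ^ 2 * t + w₂ ^ 2)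
        = (α * t + β) * (γ * t + δ)) →
      ConcaveOn ℝ (Set.Icc (0 : ℝ) 1)
        (fun t => Real.sqrt (((1 - w₁) * t - b) ^ 2 + (1 / N) * (w₁ ^ 2 * t + w₂ ^ 2))) := by
    intro α β γ δ hu hv hfact
    have := concaveOn_sqrt_mul α β γ δ (Set.Icc (0:ℝ) 1) (convex_Icc 0 1) hu hv
    simp only [hfact]
    exact this
  -- basic facts
  have hs8 : (1:ℝ) < 8 * N := by linarith
  have hw₁pos : 0 < w₁ := by
    have h1 : Real.sqrt (8 * N) < 8 * N :=
      (Real.sqrt_lt' (by linarith)).mpr (by nlinarith)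
    have h2 : 0 < (8 * N - Real.sqrt (8 * N)) / (8 * N - 1) :=
      div_pos (by linarith) (by linarith)
    linarith
  -- the key scalar inequality : 4 N (1 - w₁)² ≤ w₁⁴
  set s := Real.sqrt (8 * N) with hsdef
  have hs2 : s ^ 2 = 8 * N := Real.sq_sqrt (by linarith)
  have hsge : (2.82 : ℝ) ≤ s := by
    rw [hsdef, show (2.82:ℝ) = Real.sqrt (2.82^2) by rw [Real.sqrt_sq (by norm_num)]]
    exact Real.sqrt_le_sqrt (by nlinarith)
  have hw₁s : s / (s + 1) ≤ w₁ := by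
    have heq : (8 * N - s) / (8 * N - 1) = s / (s + 1) := by
      rw [div_eq_div_iff (by linarith) (by linarith)]
      linear_combination -hs2
    rw [← heq]; exact hw₁b
  have ha1 : 1 - w₁ ≤ 1 / (s + 1) := by
    have : s / (s + 1) + 1 / (s + 1) = 1 := by field_simp
    linarith
  have ha0 : 0 ≤ 1 - w₁ := by linarith
  have hkey : 4 * N * (1 - w₁) ^ 2 ≤ w₁ ^ 4 := by
    have h21 : 0 ≤ s ^ 2 - 2 * s - 1 := by nlinarith
    have hsp : (0:ℝ) < s + 1 := by linarith
    have step1 : 4 * N * (1 - w₁) ^ 2 ≤ 4 * N * (1 / (s + 1)) ^ 2 := by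
      have := pow_le_pow_left₀ ha0 ha1 2
      nlinarith
    have step2 : 4 * N * (1 / (s + 1)) ^ 2 ≤ (s / (s + 1)) ^ 4 := by
      rw [show 4 * N * (1 / (s + 1)) ^ 2 = (4 * N) / (s + 1) ^ 2 by
        field_simp, show (s / (s+1)) ^ 4 = s ^ 4 / (s+1) ^ 4 by rw [div_pow],
        div_le_div_iff₀ (by positivity) (by positivity)]
      have h64 : s ^ 4 = 64 * N ^ 2 := by
        linear_combination (s ^ 2 + 8 * N) * hs2
      have h21' : (s + 1) ^ 2 ≤ 16 * N := by nlinarith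
      nlinarith [h64, mul_le_mul_of_nonneg_left h21'
        (by positivity : (0:ℝ) ≤ 4 * N * (s + 1) ^ 2)]
    have step3 : (s / (s + 1)) ^ 4 ≤ w₁ ^ 4 :=
      pow_le_pow_left₀ (by positivity) hw₁s 4
    linarith
  -- coefficients of the quadratic under the square root
  set A := (1 - w₁) ^ 2 with hAdef
  set B := w₁ ^ 2 / N - 2 * (1 - w₁) * b with hBdef
  set C := b ^ 2 + w₂ ^ 2 / N with hCdef
  have hqid : ∀ t : ℝ, ((1 - w₁) * t - b) ^ 2 + (1 / N) * (w₁ ^ 2 * t + w₂ ^ 2)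
      = A * t ^ 2 + B * t + C := by
    intro t; rw [hAdef, hBdef, hCdef]; field_simp; ring
  have hba : b ≤ 1 - w₁ := by linarith
  have hD : 4 * A * C ≤ B ^ 2 := by
    have hpoly : 4 * (1 - w₁) ^ 2 * (b ^ 2 * N + w₂ ^ 2) * N
        ≤ (w₁ ^ 2 - 2 * (1 - w₁) * b * N) ^ 2 := by
      have H1 : 0 ≤ N * (1 - w₁) * w₁ ^ 2 * ((1 - w₁) - b) :=
        mul_nonneg (mul_nonneg (mul_nonneg hN0.le ha0) (sq_nonneg w₁))
          (sub_nonneg.mpr hba)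
      have H2 : 0 ≤ N * (1 - w₁) ^ 2 * ((1 - w₁) ^ 2 - w₂ ^ 2) :=
        mul_nonneg (mul_nonneg hN0.le (sq_nonneg (1 - w₁)))
          (by nlinarith : (0:ℝ) ≤ (1 - w₁) ^ 2 - w₂ ^ 2)
      have H3 : 0 ≤ N * (1 - w₁) ^ 2 * (1 - (1 - w₁) ^ 2 - w₁ ^ 2) :=
        mul_nonneg (mul_nonneg hN0.le (sq_nonneg (1 - w₁)))
          (by nlinarith [mul_nonneg ha0 hw₁0] :
            (0:ℝ) ≤ 1 - (1 - w₁) ^ 2 - w₁ ^ 2)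
      have hkey' : 4 * N * (1 - w₁) ^ 2 ≤ w₁ ^ 4 := by
        rw [hAdef] at hkey; exact hkey
      linarith [hkey', H1, H2, H3]
    have hBN : B * N = w₁ ^ 2 - 2 * (1 - w₁) * b * N := by
      rw [hBdef]; field_simp
    have hCN : C * N = b ^ 2 * N + w₂ ^ 2 := by
      rw [hCdef]; field_simp
    rw [← hBN, ← hCN, ← hAdef] at hpoly
    have h3 : 4 * A * C * N ^ 2 ≤ B ^ 2 * N ^ 2 := by nlinarith [hpoly]
    exact (mul_le_mul_iff_of_pos_right (pow_pos hN0 2)).mp h3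
  -- positivity of the quadratic on (0,1]
  have hqpos : ∀ t : ℝ, 0 < t → t ≤ 1 → 0 < A * t ^ 2 + B * t + C := by
    intro t ht ht1
    rw [← hqid t]
    nlinarith [sq_nonneg ((1 - w₁) * t - b),
      mul_pos (show (0:ℝ) < 1 / N by positivity)
        (mul_pos (pow_pos hw₁pos 2) ht),
      mul_nonneg (show (0:ℝ) ≤ 1 / N by positivity) (sq_nonneg w₂)]
  have hA0 : 0 ≤ A := sq_nonneg _
  rcases eq_or_lt_of_le hA0 with hA | hA
  · -- A = 0, i.e. w₁ = 1, w₂ = 0, b = 0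
    have hw1 : w₁ = 1 := by
      have : (1 - w₁) ^ 2 = 0 := hA.symm
      nlinarith
    have hw2 : w₂ = 0 := by linarith [hw₂w₁, hw₂0]
    have hb' : b = 0 := by
      have := hbw; rw [hw2] at this; linarith
    exact main (1 / N) 0 0 1
      (fun t ht => by have := ht.1; positivity)
      (fun t ht => by norm_num)
      (fun t => by rw [hw1, hw2, hb']; field_simp; ring)
  · -- A > 0 : factor through the real roots
    set sD := Real.sqrt (B ^ 2 - 4 * A * C) with hsDdef
    have hsD2 : sD ^ 2 = B ^ 2 - 4 * A * C := Real.sq_sqrt (by linarith)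
    have hsD0 : 0 ≤ sD := Real.sqrt_nonneg _
    set r := (-B - sD) / (2 * A) with hrdef
    set sr := (-B + sD) / (2 * A) with hsrdef
    have hrs : r ≤ sr := by
      rw [hrdef, hsrdef, div_le_div_iff₀ (by linarith) (by linarith)]
      nlinarith [mul_nonneg hsD0 hA.le]
    have h1 : A * (r + sr) = -B := by
      rw [hrdef, hsrdef]; field_simp; ring
    have hAne : A ≠ 0 := ne_of_gt hA
    have h2 : A * (r * sr) = C := by
      rw [hrdef, hsrdef, div_mul_div_comm,
        show (-B - sD) * (-B + sD) = B ^ 2 - sD ^ 2 by ring, hsD2]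
      field_simp
      ring
    have hfac : ∀ t : ℝ, A * t ^ 2 + B * t + C = A * (t - r) * (t - sr) := by
      intro t
      linear_combination t * h1 - h2
    by_cases hsr0 : sr ≤ 0
    · -- [0,1] to the right of both roots; factors A(t-r) and (t-sr)
      have hr0 : r ≤ 0 := le_trans hrs hsr0
      refine main A (-(A * r)) 1 (-sr)
        (fun t ht => by
          nlinarith [mul_nonneg hA.le ht.1, mul_nonneg hA.le (neg_nonneg.mpr hr0)])
        (fun t ht => by have := ht.1; linarith)
        (fun t => by rw [hqid t, hfac t]; ring)
    · push_neg at hsr0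
      have hr1 : 1 ≤ r := by
        by_contra hr1
        push_neg at hr1
        have h1 : 0 < A * 1 ^ 2 + B * 1 + C := hqpos 1 one_pos le_rfl
        rw [hfac 1] at h1
        have hsr1 : sr < 1 := by
          by_contra hs1
          push_neg at hs1
          have hx : 0 < A * (1 - r) := mul_pos hA (by linarith)
          nlinarith [mul_nonpos_of_nonneg_of_nonpos hx.le
            (by linarith : 1 - sr ≤ 0)]
        have h2 : 0 < A * sr ^ 2 + B * sr + C := hqpos sr hsr0 hsr1.le
        rw [hfac sr] at h2
        nlinarith
      refine main (-A) (A * r) (-1) sr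
        (fun t ht => by nlinarith [mul_nonneg hA.le (sub_nonneg.mpr (le_trans ht.2 hr1))])
        (fun t ht => by have h := le_trans ht.2 (le_trans hr1 hrs); linarith)
        (fun t => by rw [hqid t, hfac t]; ring)
end
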